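/- Let ψ : ℝⁿ → ℂ be a Schwartz function whose Fourier transform is supported in {|ξ| ≤ 4}, let 0 < r < 1, and define P f = f * ψ. Then there is a constant C = C(ψ, n, r) such that for every Schwartz f with supp(f̂) ⊆ {|ξ| < 2}, one has |(Pf)(x)| ≤ C (M(|f|^r)(x))^{1/r} for all x ∈ ℝⁿ, where M is the Hardy–Littlewood maximal function. The frequency support assumption on f is necessary: the estimate fails for general f when r < 1. -/

import Mathlib

open MeasureTheory Filter
open scoped FourierTransform ENNReal NNReal

/-- The uncentered Hardy–Littlewood maximal function (over balls containing `x`). -/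
noncomputable def maximal {n : ℕ} (g : EuclideanSpace ℝ (Fin n) → ℝ)
    (x : EuclideanSpace ℝ (Fin n)) : ℝ≥0∞ :=
  ⨆ (y : EuclideanSpace ℝ (Fin n)) (R : ℝ) (_ : 0 < R) (_ : x ∈ Metric.ball y R),
    (∫⁻ z in Metric.ball y R, ENNReal.ofReal |g z|) / volume (Metric.ball y R)

open Metric SchwartzMap
open scoped ContDiff

noncomputable def chiBump (n : ℕ) : ContDiffBump (0 : EuclideanSpace ℝ (Fin n)) :=
  ⟨2, 3, by norm_num, by norm_num⟩

noncomputable def chiS (n : ℕ) : SchwartzMap (EuclideanSpace ℝ (Fin n)) ℂ where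
  toFun x := (chiBump n x : ℂ)
  smooth' := by
    have h : ContDiff ℝ ∞ ⇑(chiBump n) := (chiBump n).contDiff
    exact Complex.ofRealCLM.contDiff.comp h
  decay' := by
    intro k m
    have hcs : HasCompactSupport fun x : EuclideanSpace ℝ (Fin n) => (chiBump n x : ℂ) := by
      have := (chiBump n).hasCompactSupport
      exact this.comp_left (g := fun t : ℝ => (t : ℂ)) (by simp)
    have hsm : ContDiff ℝ ∞ fun x : EuclideanSpace ℝ (Fin n) => (chiBump n x : ℂ) :=
      Complex.ofRealCLM.contDiff.comp (chiBump n).contDiff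
    have h1 : HasCompactSupport (iteratedFDeriv ℝ m fun x : EuclideanSpace ℝ (Fin n) => (chiBump n x : ℂ)) :=
      hcs.iteratedFDeriv m
    have h2 : HasCompactSupport fun x : EuclideanSpace ℝ (Fin n) =>
        ‖x‖ ^ k * ‖iteratedFDeriv ℝ m (fun x : EuclideanSpace ℝ (Fin n) => (chiBump n x : ℂ)) x‖ := by
      apply HasCompactSupport.mul_left
      exact h1.norm
    have hc : Continuous fun x : EuclideanSpace ℝ (Fin n) =>
        ‖x‖ ^ k * ‖iteratedFDeriv ℝ m (fun x : EuclideanSpace ℝ (Fin n) => (chiBump n x : ℂ)) x‖ :=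
      ((continuous_norm.pow k).mul (hsm.continuous_iteratedFDeriv (mod_cast le_top)).norm)
    obtain ⟨C, hC⟩ := hc.bounded_above_of_compact_support h2
    exact ⟨C, fun x => by simpa using hC x⟩

lemma chiS_eq_one {n : ℕ} {ξ : EuclideanSpace ℝ (Fin n)} (hξ : ‖ξ‖ ≤ 2) : chiS n ξ = 1 := by
  have h : chiBump n ξ = 1 := (chiBump n).one_of_mem_closedBall (by simpa [dist_eq_norm, chiBump] using hξ)
  show ((chiBump n ξ : ℝ) : ℂ) = 1
  rw [h]; norm_num

noncomputable def phiS (n : ℕ) : SchwartzMap (EuclideanSpace ℝ (Fin n)) ℂ :=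
  (fourierTransformCLE ℂ (SchwartzMap (EuclideanSpace ℝ (Fin n)) ℂ)).symm (chiS n)

lemma phiS_eq (n : ℕ) (u : EuclideanSpace ℝ (Fin n)) :
    phiS n u = ∫ ξ, Real.fourierChar (inner ℝ ξ u : ℝ) • chiS n ξ := by
  have : ⇑(phiS n) = 𝓕⁻ ⇑(chiS n) := by
    rw [phiS]; exact SchwartzMap.fourierInv_coe (chiS n)
  rw [congrFun this u, Real.fourierInv_eq]

variable {n : ℕ}

lemma conv_integrand_integrable (f : SchwartzMap (EuclideanSpace ℝ (Fin n)) ℂ)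
    (z : EuclideanSpace ℝ (Fin n)) :
    Integrable (fun w => f w * phiS n (z - w)) := by
  have hb : ∃ C, ∀ u : EuclideanSpace ℝ (Fin n), ‖phiS n u‖ ≤ C :=
    ⟨SchwartzMap.seminorm ℝ 0 0 (phiS n), fun u => (phiS n).norm_le_seminorm ℝ u⟩
  obtain ⟨C, hC⟩ := hb
  refine (f.integrable.norm.mul_const C).mono' ?_ ?_
  · exact (f.continuous.mul ((phiS n).continuous.comp (continuous_const.sub continuous_id))).aestronglyMeasurable
  · filter_upwards with w
    rw [norm_mul]
    exact mul_le_mul_of_nonneg_left (hC _) (norm_nonneg _)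

lemma repro (f : SchwartzMap (EuclideanSpace ℝ (Fin n)) ℂ)
    (hf : Function.support (𝓕 (fun x => f x)) ⊆ Metric.ball (0 : EuclideanSpace ℝ (Fin n)) 2)
    (z : EuclideanSpace ℝ (Fin n)) :
    ∫ w, f w * phiS n (z - w) = f z := by
  have hchi : ∀ ξ : EuclideanSpace ℝ (Fin n), chiS n ξ * 𝓕 (fun x => f x) ξ = 𝓕 (fun x => f x) ξ := by
    intro ξ
    by_cases h : 𝓕 (fun x => f x) ξ = 0
    · simp [h]
    · have : ξ ∈ Metric.ball (0 : EuclideanSpace ℝ (Fin n)) 2 := hf h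
      rw [chiS_eq_one (le_of_lt (by simpa [dist_eq_norm] using this)), one_mul]
  have hInt : Integrable (Function.uncurry fun w ξ : EuclideanSpace ℝ (Fin n) =>
      f w * (Real.fourierChar (inner ℝ ξ (z - w) : ℝ) • chiS n ξ)) (volume.prod volume) := by
    have hbase : Integrable (fun p : EuclideanSpace ℝ (Fin n) × EuclideanSpace ℝ (Fin n) =>
        ‖f p.1‖ * ‖chiS n p.2‖) (volume.prod volume) :=
      f.integrable.norm.mul_prod (chiS n).integrable.norm
    refine hbase.mono' ?_ ?_
    · apply Continuous.aestronglyMeasurable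
      refine (f.continuous.comp continuous_fst).mul (Continuous.smul ?_ ((chiS n).continuous.comp continuous_snd))
      exact continuous_subtype_val.comp <| Real.continuous_fourierChar.comp
        (Continuous.inner (𝕜 := ℝ) (E := EuclideanSpace ℝ (Fin n)) (α := EuclideanSpace ℝ (Fin n) × EuclideanSpace ℝ (Fin n)) continuous_snd (continuous_const.sub continuous_fst))
    · filter_upwards with p
      simp [Function.uncurry, norm_mul, norm_smul]
  calc ∫ w, f w * phiS n (z - w)
      = ∫ w, ∫ ξ, f w * (Real.fourierChar (inner ℝ ξ (z - w) : ℝ) • chiS n ξ) := by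
        congr 1; ext w
        rw [phiS_eq, ← integral_const_mul]
    _ = ∫ ξ, ∫ w, f w * (Real.fourierChar (inner ℝ ξ (z - w) : ℝ) • chiS n ξ) :=
        integral_integral_swap hInt
    _ = ∫ ξ, Real.fourierChar (inner ℝ ξ z : ℝ) • (chiS n ξ * 𝓕 (fun x => f x) ξ) := by
        congr 1; ext ξ
        rw [Real.fourier_eq, ← integral_const_mul, Circle.smul_def, smul_eq_mul, ← integral_const_mul]
        congr 1; ext w
        have h1 : (inner ℝ ξ (z - w) : ℝ) = (inner ℝ ξ z : ℝ) + (-(inner ℝ w ξ : ℝ)) := by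
          rw [inner_sub_right, real_inner_comm w ξ]; ring
        rw [h1]
        simp only [Circle.smul_def, AddChar.map_add_eq_mul, Circle.coe_mul, smul_eq_mul]
        push_cast
        ring
    _ = ∫ ξ, Real.fourierChar (inner ℝ ξ z : ℝ) • 𝓕 (fun x => f x) ξ := by
        congr 1; ext ξ; rw [hchi]
    _ = f z := by
        have h2 : Integrable (𝓕 (fun x => f x)) := by
          have : 𝓕 (fun x => f x) = ⇑(fourierTransformCLM ℂ f) := by
            rw [fourierTransformCLM_apply, SchwartzMap.fourier_coe]
          rw [this]; exact (fourierTransformCLM ℂ f).integrable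
        have := Continuous.fourierInv_fourier_eq f.continuous f.integrable h2
        rw [← Real.fourierInv_eq, this]

lemma schwartz_decay {n : ℕ} (g : SchwartzMap (EuclideanSpace ℝ (Fin n)) ℂ) (k : ℕ) :
    ∃ Cφ : ℝ, 0 < Cφ ∧ ∀ u : EuclideanSpace ℝ (Fin n),
    ‖g u‖ ≤ Cφ * (1 + ‖u‖) ^ (-(k : ℝ)) ∧
    ‖fderiv ℝ (⇑g) u‖ ≤ Cφ * (1 + ‖u‖) ^ (-(k : ℝ)) := by
  set S : ℝ := 2 ^ k * ((Finset.Iic ((k, 1) : ℕ × ℕ)).sup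
    (fun m => SchwartzMap.seminorm ℝ m.1 m.2) g) with hS
  refine ⟨S + 1, by positivity, fun u => ?_⟩
  have hpos : (0:ℝ) < 1 + ‖u‖ := by positivity
  have hpow : (1 + ‖u‖) ^ (-(k:ℝ)) = ((1 + ‖u‖) ^ k)⁻¹ := by
    rw [Real.rpow_neg hpos.le, Real.rpow_natCast]
  have key : ∀ j : ℕ, j ≤ 1 → ‖iteratedFDeriv ℝ j (⇑g) u‖ ≤ (S + 1) * (1 + ‖u‖) ^ (-(k:ℝ)) := by
    intro j hj
    have h := SchwartzMap.one_add_le_sup_seminorm_apply (𝕜 := ℝ) (m := ((k, 1) : ℕ × ℕ))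
      (le_refl k) hj g u
    rw [hpow]
    have h2 : (1 + ‖u‖) ^ k * ‖iteratedFDeriv ℝ j (⇑g) u‖ ≤ S := by
      simpa [hS] using h
    calc ‖iteratedFDeriv ℝ j (⇑g) u‖
        = ((1 + ‖u‖) ^ k * ‖iteratedFDeriv ℝ j (⇑g) u‖) * ((1 + ‖u‖) ^ k)⁻¹ := by
          field_simp
      _ ≤ (S + 1) * ((1 + ‖u‖) ^ k)⁻¹ :=
          mul_le_mul_of_nonneg_right (by linarith) (by positivity)
  constructor
  · have := key 0 (by norm_num)
    simpa [norm_iteratedFDeriv_zero] using this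
  · have := key 1 (by norm_num)
    have h1 : ‖fderiv ℝ (⇑g) u‖ = ‖iteratedFDeriv ℝ 1 (⇑g) u‖ := by
      rw [← norm_iteratedFDeriv_fderiv, norm_iteratedFDeriv_zero]
    rw [h1]; exact this

lemma peetre_rpow {a b c s : ℝ} (ha : 0 ≤ a) (hb : 0 ≤ b) (hs : 0 ≤ s) (hc : 0 ≤ c)
    (h : c ≤ a + b) : (1 + c) ^ s ≤ (1 + a) ^ s * (1 + b) ^ s := by
  rw [← Real.mul_rpow (by positivity) (by positivity)]
  exact Real.rpow_le_rpow (by linarith) (by nlinarith) hs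

lemma lip (n : ℕ) (a : ℝ) (ha : 0 ≤ a) :
    ∃ C₂ : ℝ, 0 < C₂ ∧ ∀ (f : SchwartzMap (EuclideanSpace ℝ (Fin n)) ℂ),
      Function.support (𝓕 (fun x => f x)) ⊆ Metric.ball (0 : EuclideanSpace ℝ (Fin n)) 2 →
      ∀ (A : ℝ), 0 ≤ A → ∀ (x : EuclideanSpace ℝ (Fin n)),
      (∀ w, ‖f w‖ ≤ A * (1 + ‖x - w‖) ^ a) →
      ∀ z z' : EuclideanSpace ℝ (Fin n), ‖z - z'‖ ≤ 1 →
      ‖f z - f z'‖ ≤ C₂ * ‖z - z'‖ * A * (1 + ‖x - z‖) ^ a := by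
  obtain ⟨k, hk⟩ : ∃ k : ℕ, (n:ℝ) + a < k := ⟨n + ⌈a⌉₊ + 1, by push_cast; linarith [Nat.le_ceil a]⟩
  obtain ⟨Cφ, hCφ, hφ⟩ := schwartz_decay (phiS n) k
  have hint : Integrable (fun u : EuclideanSpace ℝ (Fin n) => (1 + ‖u‖) ^ (a - (k:ℝ))) := by
    have he : (fun u : EuclideanSpace ℝ (Fin n) => (1 + ‖u‖) ^ (a - (k:ℝ)))
        = fun u => (1 + ‖u‖) ^ (-((k:ℝ) - a)) := by ext u; ring_nf
    rw [he]
    apply integrable_one_add_norm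
    rw [finrank_euclideanSpace_fin]; linarith
  set I : ℝ := ∫ u : EuclideanSpace ℝ (Fin n), (1 + ‖u‖) ^ (a - (k:ℝ)) with hI
  have hI0 : 0 ≤ I := integral_nonneg fun u => Real.rpow_nonneg (by positivity) _
  refine ⟨Cφ * 2 ^ (k:ℝ) * I + 1, by positivity, fun f hf A hA x hAf z z' hzz => ?_⟩
  have hdiffeq : f z - f z' = ∫ w, f w * (phiS n (z - w) - phiS n (z' - w)) := by
    rw [← repro f hf z, ← repro f hf z',
      ← integral_sub (conv_integrand_integrable f z) (conv_integrand_integrable f z')]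
    congr 1; ext w; ring
  have key : ∀ w, ‖f w * (phiS n (z - w) - phiS n (z' - w))‖ ≤
      (Cφ * 2 ^ (k:ℝ) * ‖z - z'‖ * A * (1 + ‖x - z‖) ^ a) * (1 + ‖z - w‖) ^ (a - (k:ℝ)) := by
    intro w
    rw [norm_mul]
    have hzw : (0:ℝ) < 1 + ‖z - w‖ := by positivity
    have hphi : ‖phiS n (z - w) - phiS n (z' - w)‖ ≤
        (Cφ * 2 ^ (k:ℝ) * (1 + ‖z - w‖) ^ (-(k:ℝ))) * ‖z - z'‖ := by
      have hmem1 : z - w ∈ Metric.closedBall (z - w) 1 := Metric.mem_closedBall_self (by norm_num)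
      have hmem2 : z' - w ∈ Metric.closedBall (z - w) 1 := by
        rw [Metric.mem_closedBall, dist_eq_norm]
        simpa [sub_sub_sub_cancel_right] using (norm_sub_rev z z' ▸ hzz)
      have hbd : ∀ v ∈ Metric.closedBall (z - w) 1,
          ‖fderiv ℝ (⇑(phiS n)) v‖ ≤ Cφ * 2 ^ (k:ℝ) * (1 + ‖z - w‖) ^ (-(k:ℝ)) := by
        intro v hv
        have h1 : (1 : ℝ) + ‖z - w‖ ≤ 2 * (1 + ‖v‖) := by
          have : ‖z - w‖ ≤ ‖v‖ + 1 := by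
            have hd : ‖z - w - v‖ ≤ 1 := by
              rw [Metric.mem_closedBall, dist_eq_norm] at hv
              simpa [norm_sub_rev] using hv
            calc ‖z - w‖ = ‖v + (z - w - v)‖ := by congr 1; abel
              _ ≤ ‖v‖ + ‖z - w - v‖ := norm_add_le _ _
              _ ≤ ‖v‖ + 1 := by linarith
          linarith [norm_nonneg v]
        have h2 : (1 + ‖v‖ : ℝ) ^ (-(k:ℝ)) ≤ 2 ^ (k:ℝ) * (1 + ‖z - w‖) ^ (-(k:ℝ)) := by
          have h3 : ((1 + ‖z - w‖) / 2 : ℝ) ^ (-(k:ℝ)) = 2 ^ (k:ℝ) * (1 + ‖z - w‖) ^ (-(k:ℝ)) := by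
            rw [Real.div_rpow (by positivity) (by norm_num),
              Real.rpow_neg (by norm_num : (0:ℝ) ≤ 2) (k:ℝ)]
            field_simp
          calc (1 + ‖v‖ : ℝ) ^ (-(k:ℝ))
              ≤ ((1 + ‖z - w‖) / 2 : ℝ) ^ (-(k:ℝ)) :=
                Real.rpow_le_rpow_of_nonpos (by positivity) (by linarith)
                  (neg_nonpos.mpr (by positivity))
            _ = 2 ^ (k:ℝ) * (1 + ‖z - w‖) ^ (-(k:ℝ)) := h3
        calc ‖fderiv ℝ (⇑(phiS n)) v‖ ≤ Cφ * (1 + ‖v‖) ^ (-(k:ℝ)) := (hφ v).2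
          _ ≤ Cφ * (2 ^ (k:ℝ) * (1 + ‖z - w‖) ^ (-(k:ℝ))) :=
              mul_le_mul_of_nonneg_left h2 hCφ.le
          _ = Cφ * 2 ^ (k:ℝ) * (1 + ‖z - w‖) ^ (-(k:ℝ)) := by ring
      have := Convex.norm_image_sub_le_of_norm_fderiv_le (𝕜 := ℝ)
        (fun v _ => (phiS n).differentiable.differentiableAt) hbd
        (convex_closedBall _ _) hmem2 hmem1
      calc ‖phiS n (z - w) - phiS n (z' - w)‖
          ≤ (Cφ * 2 ^ (k:ℝ) * (1 + ‖z - w‖) ^ (-(k:ℝ))) * ‖z - w - (z' - w)‖ := this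
        _ = (Cφ * 2 ^ (k:ℝ) * (1 + ‖z - w‖) ^ (-(k:ℝ))) * ‖z - z'‖ := by
            rw [sub_sub_sub_cancel_right]
    have hfw : ‖f w‖ ≤ A * ((1 + ‖x - z‖) ^ a * (1 + ‖z - w‖) ^ a) := by
      calc ‖f w‖ ≤ A * (1 + ‖x - w‖) ^ a := hAf w
        _ ≤ A * ((1 + ‖x - z‖) ^ a * (1 + ‖z - w‖) ^ a) := by
            apply mul_le_mul_of_nonneg_left ?_ hA
            apply peetre_rpow (norm_nonneg _) (norm_nonneg _) ha (norm_nonneg _)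
            calc ‖x - w‖ = ‖(x - z) + (z - w)‖ := by congr 1; abel
              _ ≤ ‖x - z‖ + ‖z - w‖ := norm_add_le _ _
    calc ‖f w‖ * ‖phiS n (z - w) - phiS n (z' - w)‖
        ≤ (A * ((1 + ‖x - z‖) ^ a * (1 + ‖z - w‖) ^ a)) *
            ((Cφ * 2 ^ (k:ℝ) * (1 + ‖z - w‖) ^ (-(k:ℝ))) * ‖z - z'‖) :=
          mul_le_mul hfw hphi (norm_nonneg _) (by positivity)
      _ = (Cφ * 2 ^ (k:ℝ) * ‖z - z'‖ * A * (1 + ‖x - z‖) ^ a) *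
            ((1 + ‖z - w‖) ^ a * (1 + ‖z - w‖) ^ (-(k:ℝ))) := by ring
      _ = (Cφ * 2 ^ (k:ℝ) * ‖z - z'‖ * A * (1 + ‖x - z‖) ^ a) * (1 + ‖z - w‖) ^ (a - (k:ℝ)) := by
          rw [← Real.rpow_add hzw]; ring_nf
  have htrans : Integrable (fun w : EuclideanSpace ℝ (Fin n) => (1 + ‖z - w‖) ^ (a - (k:ℝ))) := by
    have := hint.comp_sub_left z
    simpa using this
  rw [hdiffeq]
  have hP : (0:ℝ) ≤ ‖z - z'‖ * (A * (1 + ‖x - z‖) ^ a) := by positivity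
  calc ‖∫ w, f w * (phiS n (z - w) - phiS n (z' - w))‖
      ≤ ∫ w, (Cφ * 2 ^ (k:ℝ) * ‖z - z'‖ * A * (1 + ‖x - z‖) ^ a) * (1 + ‖z - w‖) ^ (a - (k:ℝ)) := by
        apply norm_integral_le_of_norm_le (htrans.const_mul _)
        filter_upwards with w using key w
    _ = (Cφ * 2 ^ (k:ℝ) * ‖z - z'‖ * A * (1 + ‖x - z‖) ^ a) * I := by
        rw [integral_const_mul]
        congr 1
        exact integral_sub_left_eq_self (fun u => (1 + ‖u‖) ^ (a - (k:ℝ))) volume z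
    _ = (Cφ * 2 ^ (k:ℝ) * I) * (‖z - z'‖ * (A * (1 + ‖x - z‖) ^ a)) := by ring
    _ ≤ (Cφ * 2 ^ (k:ℝ) * I + 1) * (‖z - z'‖ * (A * (1 + ‖x - z‖) ^ a)) :=
        mul_le_mul_of_nonneg_right (by linarith) hP
    _ = (Cφ * 2 ^ (k:ℝ) * I + 1) * ‖z - z'‖ * A * (1 + ‖x - z‖) ^ a := by ring

lemma real_rpow_add_le {u v r : ℝ} (hu : 0 ≤ u) (hv : 0 ≤ v) (hr : 0 ≤ r) (hr1 : r ≤ 1) :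
    (u + v) ^ r ≤ u ^ r + v ^ r := by
  have h := NNReal.rpow_add_le_add_rpow (Real.toNNReal u) (Real.toNNReal v) hr hr1
  rw [← Real.toNNReal_add hu hv] at h
  have h2 := NNReal.coe_le_coe.mpr h
  push_cast [NNReal.coe_rpow, Real.coe_toNNReal _ (by positivity : (0:ℝ) ≤ u + v),
    Real.coe_toNNReal _ hu, Real.coe_toNNReal _ hv] at h2
  exact h2

/-- If `ψ` is Schwartz with Fourier support in `{|ξ| ≤ 4}` and `0 < r < 1`, then for every
Schwartz `f` with Fourier support in `{|ξ| < 2}` one has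
`|(f * ψ)(x)| ≤ C (M(|f|^r)(x))^{1/r}`. -/
theorem convolution_maximal_subunit_exponent {n : ℕ} (hn : 0 < n)
    (ψ : SchwartzMap (EuclideanSpace ℝ (Fin n)) ℂ)
    (hψ : Function.support (𝓕 (fun x => ψ x))
      ⊆ Metric.closedBall (0 : EuclideanSpace ℝ (Fin n)) 4)
    (r : ℝ) (hr : 0 < r) (hr1 : r < 1) :
    ∃ C : ℝ≥0, 0 < C ∧ ∀ f : SchwartzMap (EuclideanSpace ℝ (Fin n)) ℂ,
      Function.support (𝓕 (fun x => f x))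
        ⊆ Metric.ball (0 : EuclideanSpace ℝ (Fin n)) 2 →
      ∀ x : EuclideanSpace ℝ (Fin n),
        ENNReal.ofReal ‖∫ y, ψ y * f (x - y)‖
          ≤ (C : ℝ≥0∞) * (maximal (fun z => ‖f z‖ ^ r) x) ^ (1 / r) := by
  classical
  haveI : Nontrivial (EuclideanSpace ℝ (Fin n)) := by
    apply Module.nontrivial_of_finrank_pos (R := ℝ)
    rw [finrank_euclideanSpace_fin]; exact hn
  set a : ℝ := n / r with ha_def
  have ha : 0 ≤ a := by positivity
  have har : a * r = n := div_mul_cancel₀ _ hr.ne'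
  obtain ⟨C₂, hC₂, hlip⟩ := lip n a ha
  -- the constant ε
  set ε : ℝ := min 1 ((2:ℝ) ^ (-(1/r)) / C₂) with hε_def
  have hε_pos : 0 < ε := lt_min one_pos (by positivity)
  have hε1 : ε ≤ 1 := min_le_left _ _
  have hεC : (C₂ * ε) ^ r ≤ 1 / 2 := by
    have h1 : C₂ * ε ≤ 2 ^ (-(1/r)) := by
      have h0 := min_le_right 1 ((2:ℝ) ^ (-(1/r)) / C₂)
      calc C₂ * ε ≤ C₂ * ((2:ℝ) ^ (-(1/r)) / C₂) := mul_le_mul_of_nonneg_left h0 hC₂.le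
        _ = 2 ^ (-(1/r)) := by field_simp
    calc (C₂ * ε) ^ r ≤ ((2:ℝ) ^ (-(1/r))) ^ r := Real.rpow_le_rpow (by positivity) h1 hr.le
      _ = (2:ℝ) ^ (-(1/r) * r) := by rw [← Real.rpow_mul (by norm_num)]
      _ = (2:ℝ) ^ (-(1:ℝ)) := by rw [neg_mul, one_div, inv_mul_cancel₀ hr.ne']
      _ = 1 / 2 := by norm_num [Real.rpow_neg_one]
  -- integral weight for ψ
  obtain ⟨K, hKlt⟩ : ∃ K : ℕ, (n:ℝ) + a < K := ⟨n + ⌈a⌉₊ + 1, by push_cast; linarith [Nat.le_ceil a]⟩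
  obtain ⟨Cψ, hCψ, hψd⟩ := schwartz_decay ψ K
  have hintw : Integrable (fun u : EuclideanSpace ℝ (Fin n) => (1 + ‖u‖) ^ (a - (K:ℝ))) := by
    have he : (fun u : EuclideanSpace ℝ (Fin n) => (1 + ‖u‖) ^ (a - (K:ℝ)))
        = fun u => (1 + ‖u‖) ^ (-((K:ℝ) - a)) := by ext u; ring_nf
    rw [he]
    apply integrable_one_add_norm
    rw [finrank_euclideanSpace_fin]; linarith
  have hψint : Integrable (fun y : EuclideanSpace ℝ (Fin n) => ‖ψ y‖ * (1 + ‖y‖) ^ a) := by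
    refine (hintw.const_mul Cψ).mono' ?_ ?_
    · exact (ψ.continuous.norm.mul ((continuous_const.add continuous_norm).rpow_const
        (fun y => Or.inr ha))).aestronglyMeasurable
    · filter_upwards with y
      have hb : (0:ℝ) < 1 + ‖y‖ := by positivity
      rw [Real.norm_eq_abs, abs_of_nonneg (by positivity)]
      calc ‖ψ y‖ * (1 + ‖y‖) ^ a ≤ (Cψ * (1 + ‖y‖) ^ (-(K:ℝ))) * (1 + ‖y‖) ^ a :=
            mul_le_mul_of_nonneg_right (hψd y).1 (by positivity)
        _ = Cψ * (1 + ‖y‖) ^ (a - (K:ℝ)) := by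
            rw [mul_assoc, ← Real.rpow_add hb]; ring_nf
  set Aψ : ℝ := ∫ y : EuclideanSpace ℝ (Fin n), ‖ψ y‖ * (1 + ‖y‖) ^ a with hAψ_def
  have hAψ0 : 0 ≤ Aψ := integral_nonneg fun y => by positivity
  set c1 : ℝ := (2 / ε ^ n) ^ (1/r) with hc1_def
  have hc10 : 0 ≤ c1 := Real.rpow_nonneg (by positivity) _
  set Creal : ℝ := max 1 (Aψ * c1) with hCreal_def
  have hCreal1 : (1:ℝ) ≤ Creal := le_max_left _ _
  refine ⟨Creal.toNNReal, Real.toNNReal_pos.mpr (by linarith), fun f hf x => ?_⟩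
  set M : ℝ≥0∞ := maximal (fun z => ‖f z‖ ^ r) x with hM_def
  by_cases hMtop : M = ⊤
  · rw [hMtop, ENNReal.top_rpow_of_pos (by positivity), ENNReal.mul_top]
    · exact le_top
    · simp only [ne_eq, ENNReal.coe_eq_zero, Real.toNNReal_eq_zero, not_le]
      linarith
  -- finite case
  set Mr : ℝ := M.toReal with hMr_def
  have hMr0 : 0 ≤ Mr := ENNReal.toReal_nonneg
  -- the Peetre maximal quantity F
  have hBdd : BddAbove (Set.range fun y : EuclideanSpace ℝ (Fin n) =>
      ‖f (x - y)‖ * (1 + ‖y‖) ^ (-a)) := by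
    refine ⟨SchwartzMap.seminorm ℝ 0 0 f, ?_⟩
    rintro t ⟨y, rfl⟩
    calc ‖f (x - y)‖ * (1 + ‖y‖) ^ (-a)
        ≤ ‖f (x - y)‖ * 1 := mul_le_mul_of_nonneg_left
          (Real.rpow_le_one_of_one_le_of_nonpos (by linarith [norm_nonneg y]) (by linarith))
          (norm_nonneg _)
      _ = ‖f (x - y)‖ := mul_one _
      _ ≤ SchwartzMap.seminorm ℝ 0 0 f := f.norm_le_seminorm ℝ _
  set F : ℝ := ⨆ y : EuclideanSpace ℝ (Fin n), ‖f (x - y)‖ * (1 + ‖y‖) ^ (-a) with hF_def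
  have hF0 : 0 ≤ F := le_trans (by positivity) (le_ciSup hBdd (0 : EuclideanSpace ℝ (Fin n)))
  have hFle : ∀ w, ‖f w‖ ≤ F * (1 + ‖x - w‖) ^ a := by
    intro w
    have h1 : ‖f (x - (x - w))‖ * (1 + ‖x - w‖) ^ (-a) ≤ F := le_ciSup hBdd (x - w)
    have h2 : x - (x - w) = w := by abel
    rw [h2] at h1
    have hb : (0:ℝ) < 1 + ‖x - w‖ := by positivity
    calc ‖f w‖ = (‖f w‖ * (1 + ‖x - w‖) ^ (-a)) * (1 + ‖x - w‖) ^ a := by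
          rw [mul_assoc, ← Real.rpow_add hb, neg_add_cancel, Real.rpow_zero, mul_one]
      _ ≤ F * (1 + ‖x - w‖) ^ a :=
          mul_le_mul_of_nonneg_right h1 (Real.rpow_nonneg hb.le _)
  -- ball constants
  set cB : ℝ := (volume (Metric.ball (0 : EuclideanSpace ℝ (Fin n)) 1)).toReal with hcB_def
  have hcB : 0 < cB := ENNReal.toReal_pos (measure_ball_pos volume _ one_pos).ne'
    measure_ball_lt_top.ne
  have hvol : ∀ (c : EuclideanSpace ℝ (Fin n)) (ρ : ℝ), 0 ≤ ρ →
      (volume (Metric.ball c ρ)).toReal = ρ ^ n * cB := by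
    intro c ρ hρ
    rw [Measure.addHaar_ball volume c hρ, finrank_euclideanSpace_fin, ENNReal.toReal_mul,
      ENNReal.toReal_ofReal (by positivity)]
  have hcont : Continuous fun w : EuclideanSpace ℝ (Fin n) => ‖f w‖ ^ r :=
    f.continuous.norm.rpow_const (fun w => Or.inr hr.le)
  have hIntOn : ∀ (c : EuclideanSpace ℝ (Fin n)) (ρ : ℝ),
      IntegrableOn (fun w => ‖f w‖ ^ r) (Metric.ball c ρ) :=
    fun c ρ => (hcont.continuousOn.integrableOn_compact (isCompact_closedBall c ρ)).mono_set
      Metric.ball_subset_closedBall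
  -- maximal function controls integrals over balls containing x
  have hterm : ∀ (c : EuclideanSpace ℝ (Fin n)) (R : ℝ), 0 < R → x ∈ Metric.ball c R →
      (∫⁻ w in Metric.ball c R, ENNReal.ofReal |‖f w‖ ^ r|) ≤ M * volume (Metric.ball c R) := by
    intro c R hR hx
    have h1 : (∫⁻ w in Metric.ball c R, ENNReal.ofReal |‖f w‖ ^ r|) / volume (Metric.ball c R)
        ≤ M := by
      rw [hM_def, maximal]
      exact le_iSup_of_le c (le_iSup_of_le R (le_iSup_of_le hR (le_iSup_of_le hx le_rfl)))
    calc (∫⁻ w in Metric.ball c R, ENNReal.ofReal |‖f w‖ ^ r|)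
        = ((∫⁻ w in Metric.ball c R, ENNReal.ofReal |‖f w‖ ^ r|) / volume (Metric.ball c R)) *
          volume (Metric.ball c R) := by
          rw [ENNReal.div_mul_cancel (measure_ball_pos volume _ hR).ne' measure_ball_lt_top.ne]
      _ ≤ M * volume (Metric.ball c R) := mul_le_mul_left h1 _
  -- small-ball integral bound
  have hsmall : ∀ y : EuclideanSpace ℝ (Fin n),
      ∫ w in Metric.ball (x - y) ε, ‖f w‖ ^ r ≤ Mr * ((1 + ‖y‖) ^ n * cB) := by
    intro y
    have hsub : Metric.ball (x - y) ε ⊆ Metric.ball x (‖y‖ + ε) := by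
      intro w hw
      rw [Metric.mem_ball, dist_eq_norm] at hw ⊢
      calc ‖w - x‖ = ‖(w - (x - y)) + (-y)‖ := by congr 1; abel
        _ ≤ ‖w - (x - y)‖ + ‖y‖ := by simpa using norm_add_le (w - (x - y)) (-y)
        _ < ε + ‖y‖ := by linarith
        _ = ‖y‖ + ε := by ring
    have hR : (0:ℝ) < ‖y‖ + ε := by positivity
    have hxmem : x ∈ Metric.ball x (‖y‖ + ε) := Metric.mem_ball_self hR
    have hofReal : ENNReal.ofReal (∫ w in Metric.ball (x - y) ε, ‖f w‖ ^ r)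
        = ∫⁻ w in Metric.ball (x - y) ε, ENNReal.ofReal |‖f w‖ ^ r| := by
      rw [ofReal_integral_eq_lintegral_ofReal (hIntOn _ _)
        (Filter.Eventually.of_forall fun w => by positivity)]
      congr 1; ext w
      rw [abs_of_nonneg (by positivity)]
    have hle : ENNReal.ofReal (∫ w in Metric.ball (x - y) ε, ‖f w‖ ^ r)
        ≤ M * volume (Metric.ball x (‖y‖ + ε)) := by
      rw [hofReal]
      exact le_trans (lintegral_mono_set hsub) (hterm x (‖y‖ + ε) hR hxmem)
    have hfin : M * volume (Metric.ball x (‖y‖ + ε)) ≠ ⊤ :=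
      ENNReal.mul_ne_top hMtop measure_ball_lt_top.ne
    have := ENNReal.toReal_mono hfin hle
    rw [ENNReal.toReal_ofReal (integral_nonneg fun w => by positivity)] at this
    calc ∫ w in Metric.ball (x - y) ε, ‖f w‖ ^ r
        ≤ (M * volume (Metric.ball x (‖y‖ + ε))).toReal := this
      _ = Mr * ((‖y‖ + ε) ^ n * cB) := by
          rw [ENNReal.toReal_mul, hvol x (‖y‖ + ε) hR.le]
      _ ≤ Mr * ((1 + ‖y‖) ^ n * cB) := by
          apply mul_le_mul_of_nonneg_left ?_ hMr0
          apply mul_le_mul_of_nonneg_right ?_ hcB.le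
          exact pow_le_pow_left₀ hR.le (by linarith) n
  -- pointwise estimate on each y
  set D : ℝ := C₂ * ε * F with hD_def
  have hD0 : 0 ≤ D := by positivity
  have hkey : ∀ y : EuclideanSpace ℝ (Fin n),
      ‖f (x - y)‖ ^ r * (1 + ‖y‖) ^ (-(n:ℝ)) ≤ Mr / ε ^ n + (C₂ * ε) ^ r * F ^ r := by
    intro y
    have hb : (0:ℝ) < 1 + ‖y‖ := by positivity
    have hxz : ‖x - (x - y)‖ = ‖y‖ := by
      congr 1; abel
    have hptw : ∀ w ∈ Metric.ball (x - y) ε,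
        ‖f (x - y)‖ ^ r ≤ ‖f w‖ ^ r + (D * (1 + ‖y‖) ^ a) ^ r := by
      intro w hw
      rw [Metric.mem_ball, dist_eq_norm] at hw
      have hlipw : ‖f (x - y) - f w‖ ≤ D * (1 + ‖y‖) ^ a := by
        have h1 := hlip f hf F hF0 x hFle (x - y) w (by
          rw [norm_sub_rev]
          exact le_of_lt (lt_of_lt_of_le hw hε1))
        rw [hxz] at h1
        calc ‖f (x - y) - f w‖ ≤ C₂ * ‖(x - y) - w‖ * F * (1 + ‖y‖) ^ a := h1
          _ ≤ C₂ * ε * F * (1 + ‖y‖) ^ a := by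
              apply mul_le_mul_of_nonneg_right ?_ (Real.rpow_nonneg hb.le _)
              apply mul_le_mul_of_nonneg_right ?_ hF0
              apply mul_le_mul_of_nonneg_left ?_ hC₂.le
              rw [norm_sub_rev]; exact hw.le
          _ = D * (1 + ‖y‖) ^ a := by rw [hD_def]
      have htri : ‖f (x - y)‖ ≤ ‖f w‖ + D * (1 + ‖y‖) ^ a := by
        calc ‖f (x - y)‖ = ‖f w + (f (x - y) - f w)‖ := by congr 1; ring
          _ ≤ ‖f w‖ + ‖f (x - y) - f w‖ := norm_add_le _ _
          _ ≤ ‖f w‖ + D * (1 + ‖y‖) ^ a := by linarith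
      calc ‖f (x - y)‖ ^ r ≤ (‖f w‖ + D * (1 + ‖y‖) ^ a) ^ r :=
            Real.rpow_le_rpow (norm_nonneg _) htri hr.le
        _ ≤ ‖f w‖ ^ r + (D * (1 + ‖y‖) ^ a) ^ r :=
            real_rpow_add_le (norm_nonneg _) (by positivity) hr.le hr1.le
    -- integrate over the small ball
    have hvolε : (volume (Metric.ball (x - y) ε)).toReal = ε ^ n * cB := hvol _ _ hε_pos.le
    have hvolpos : 0 < ε ^ n * cB := by positivity
    have hconst : IntegrableOn (fun _ : EuclideanSpace ℝ (Fin n) =>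
        ‖f (x - y)‖ ^ r) (Metric.ball (x - y) ε) := integrableOn_const measure_ball_lt_top.ne
    have hconst2 : IntegrableOn (fun w : EuclideanSpace ℝ (Fin n) =>
        ‖f w‖ ^ r + (D * (1 + ‖y‖) ^ a) ^ r) (Metric.ball (x - y) ε) :=
      (hIntOn _ _).add (integrableOn_const measure_ball_lt_top.ne)
    have hmono := setIntegral_mono_on hconst hconst2 measurableSet_ball hptw
    rw [setIntegral_const] at hmono
    have hadd : ∫ w in Metric.ball (x - y) ε, (‖f w‖ ^ r + (D * (1 + ‖y‖) ^ a) ^ r)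
        = (∫ w in Metric.ball (x - y) ε, ‖f w‖ ^ r) +
          (ε ^ n * cB) * (D * (1 + ‖y‖) ^ a) ^ r := by
      rw [integral_add (hIntOn _ _) (integrableOn_const measure_ball_lt_top.ne),
        setIntegral_const, measureReal_def, hvolε, smul_eq_mul]
    rw [hadd, measureReal_def, hvolε, smul_eq_mul] at hmono
    have hav : ‖f (x - y)‖ ^ r ≤ Mr * (1 + ‖y‖) ^ n / ε ^ n + (D * (1 + ‖y‖) ^ a) ^ r := by
      have h2 := hsmall y
      have h3 : ‖f (x - y)‖ ^ r * (ε ^ n * cB) ≤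
          Mr * ((1 + ‖y‖) ^ n * cB) + (ε ^ n * cB) * (D * (1 + ‖y‖) ^ a) ^ r := by linarith
      have h4 : ‖f (x - y)‖ ^ r ≤ (Mr * ((1 + ‖y‖) ^ n * cB)
          + (ε ^ n * cB) * (D * (1 + ‖y‖) ^ a) ^ r) / (ε ^ n * cB) := by
        rw [le_div_iff₀ hvolpos]
        linarith
      have heq : (Mr * ((1 + ‖y‖) ^ n * cB) + (ε ^ n * cB) * (D * (1 + ‖y‖) ^ a) ^ r)
          / (ε ^ n * cB) = Mr * (1 + ‖y‖) ^ n / ε ^ n + (D * (1 + ‖y‖) ^ a) ^ r := by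
        field_simp
      rw [heq] at h4
      exact h4
    have hcancel : ((1 + ‖y‖ : ℝ)) ^ (n:ℝ) * (1 + ‖y‖) ^ (-(n:ℝ)) = 1 := by
      rw [← Real.rpow_add hb]
      simp
    have hDr : (D * (1 + ‖y‖) ^ a) ^ r = ((C₂ * ε) ^ r * F ^ r) * (1 + ‖y‖) ^ (n:ℝ) := by
      rw [hD_def, Real.mul_rpow (by positivity) (Real.rpow_nonneg hb.le _),
        Real.mul_rpow (by positivity) hF0, ← Real.rpow_mul hb.le, har]
    calc ‖f (x - y)‖ ^ r * (1 + ‖y‖) ^ (-(n:ℝ))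
        ≤ (Mr * (1 + ‖y‖) ^ n / ε ^ n + (D * (1 + ‖y‖) ^ a) ^ r) * (1 + ‖y‖) ^ (-(n:ℝ)) :=
          mul_le_mul_of_nonneg_right hav (Real.rpow_nonneg hb.le _)
      _ = Mr / ε ^ n * ((1 + ‖y‖) ^ (n:ℝ) * (1 + ‖y‖) ^ (-(n:ℝ)))
          + (C₂ * ε) ^ r * F ^ r * ((1 + ‖y‖) ^ (n:ℝ) * (1 + ‖y‖) ^ (-(n:ℝ))) := by
          rw [hDr, ← Real.rpow_natCast (1 + ‖y‖) n]
          ring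
      _ = Mr / ε ^ n + (C₂ * ε) ^ r * F ^ r := by
          rw [hcancel]
          ring
  -- absorb
  set KK : ℝ := Mr / ε ^ n + (C₂ * ε) ^ r * F ^ r with hKK_def
  have hKK0 : 0 ≤ KK := add_nonneg (div_nonneg hMr0 (by positivity))
    (mul_nonneg (Real.rpow_nonneg (by positivity) _) (Real.rpow_nonneg hF0 _))
  have hsup : F ≤ KK ^ (1/r) := by
    rw [hF_def]
    apply ciSup_le
    intro y
    have hb : (0:ℝ) < 1 + ‖y‖ := by positivity
    have ht0 : (0:ℝ) ≤ ‖f (x - y)‖ * (1 + ‖y‖) ^ (-a) := by positivity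
    have hgy : (‖f (x - y)‖ * (1 + ‖y‖) ^ (-a)) ^ r
        = ‖f (x - y)‖ ^ r * (1 + ‖y‖) ^ (-(n:ℝ)) := by
      rw [Real.mul_rpow (norm_nonneg _) (Real.rpow_nonneg hb.le _), ← Real.rpow_mul hb.le,
        show -a * r = -(n:ℝ) by rw [neg_mul, har]]
    have h1 : (‖f (x - y)‖ * (1 + ‖y‖) ^ (-a)) ^ r ≤ KK := by
      rw [hgy]; exact hkey y
    calc ‖f (x - y)‖ * (1 + ‖y‖) ^ (-a)
        = ((‖f (x - y)‖ * (1 + ‖y‖) ^ (-a)) ^ r) ^ (1/r) := by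
          rw [← Real.rpow_mul ht0, mul_one_div_cancel hr.ne', Real.rpow_one]
      _ ≤ KK ^ (1/r) := Real.rpow_le_rpow (Real.rpow_nonneg ht0 _) h1 (by positivity)
  have hFr : F ^ r ≤ KK := by
    calc F ^ r ≤ (KK ^ (1/r)) ^ r := Real.rpow_le_rpow hF0 hsup hr.le
      _ = KK := by rw [← Real.rpow_mul hKK0, one_div_mul_cancel hr.ne', Real.rpow_one]
  have habsorb : F ^ r ≤ 2 / ε ^ n * Mr := by
    have h1 : (C₂ * ε) ^ r * F ^ r ≤ (1/2) * F ^ r :=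
      mul_le_mul_of_nonneg_right hεC (Real.rpow_nonneg hF0 _)
    rw [hKK_def] at hFr
    have h2 : Mr / ε ^ n = 1 / ε ^ n * Mr := by ring
    rw [h2] at hFr
    have hεn : (0:ℝ) < ε ^ n := by positivity
    have h5 : 2 / ε ^ n * Mr = 2 * (1 / ε ^ n * Mr) := by ring
    linarith
  have hFfinal : F ≤ c1 * Mr ^ (1/r) := by
    have h1 : F = (F ^ r) ^ (1/r) := by
      rw [← Real.rpow_mul hF0, mul_one_div_cancel hr.ne', Real.rpow_one]
    have h2 : F ≤ (2 / ε ^ n * Mr) ^ (1/r) := by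
      rw [h1]
      exact Real.rpow_le_rpow (Real.rpow_nonneg hF0 _) habsorb (by positivity)
    rwa [Real.mul_rpow (by positivity) hMr0, ← hc1_def] at h2
  -- conclude
  have hnorm : ‖∫ y, ψ y * f (x - y)‖ ≤ Aψ * F := by
    have hb1 : ∀ y : EuclideanSpace ℝ (Fin n), ‖ψ y * f (x - y)‖ ≤ F * (‖ψ y‖ * (1 + ‖y‖) ^ a) := by
      intro y
      have hxz : ‖x - (x - y)‖ = ‖y‖ := by congr 1; abel
      rw [norm_mul]
      calc ‖ψ y‖ * ‖f (x - y)‖ ≤ ‖ψ y‖ * (F * (1 + ‖x - (x - y)‖) ^ a) :=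
            mul_le_mul_of_nonneg_left (hFle (x - y)) (norm_nonneg _)
        _ = F * (‖ψ y‖ * (1 + ‖y‖) ^ a) := by rw [hxz]; ring
    calc ‖∫ y, ψ y * f (x - y)‖ ≤ ∫ y, F * (‖ψ y‖ * (1 + ‖y‖) ^ a) :=
          norm_integral_le_of_norm_le (hψint.const_mul F)
            (Filter.Eventually.of_forall hb1)
      _ = F * Aψ := by rw [integral_const_mul]
      _ = Aψ * F := mul_comm _ _
  have hreal : ‖∫ y, ψ y * f (x - y)‖ ≤ Creal * Mr ^ (1/r) := by
    calc ‖∫ y, ψ y * f (x - y)‖ ≤ Aψ * F := hnorm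
      _ ≤ Aψ * (c1 * Mr ^ (1/r)) := mul_le_mul_of_nonneg_left hFfinal hAψ0
      _ = (Aψ * c1) * Mr ^ (1/r) := by ring
      _ ≤ Creal * Mr ^ (1/r) :=
          mul_le_mul_of_nonneg_right (le_max_right _ _) (Real.rpow_nonneg hMr0 _)
  calc ENNReal.ofReal ‖∫ y, ψ y * f (x - y)‖
      ≤ ENNReal.ofReal (Creal * Mr ^ (1/r)) := ENNReal.ofReal_le_ofReal hreal
    _ = ENNReal.ofReal Creal * ENNReal.ofReal (Mr ^ (1/r)) :=
        ENNReal.ofReal_mul (by linarith)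
    _ = (Creal.toNNReal : ℝ≥0∞) * M ^ (1/r) := by
        rw [← ENNReal.ofReal_rpow_of_nonneg hMr0 (by positivity : (0:ℝ) ≤ 1/r), hMr_def,
          ENNReal.ofReal_toReal hMtop]
        rfl
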